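/- Let d : ϑ → g be a linear map of finite-dimensional vector spaces and consider the Lie 2-group g* ⋉ ϑ* with abelian group structure (g,m)·(h,n) = (g+h, m+n) and groupoid structure over ϑ* with target t(g,m) = d^T g + m. Then the space of 1-forms that are multiplicative with respect to both the group and the groupoid structures is exactly g: i.e. Ω¹_bmult(g* ⋉ ϑ*) ≅ g, where an element x ∈ g defines the constant 1-form with g-component x and ϑ-component 0. -/
import Mathlib


/-!
STATEMENT 15.  Let `d : ϑ → 𝔤` be a linear map of finite-dimensional vector spaces and
consider the Lie 2-group `𝔤* ⋉ ϑ*` with abelian group structure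
`(g,m)·(h,n) = (g+h, m+n)` and groupoid structure over `ϑ*` with target
`t(g,m) = dᵀg + m`.  Then the space of 1-forms multiplicative with respect to both the
group and the groupoid structures is exactly `𝔤`: a 1-form `Θ` is bi-multiplicative if
and only if there is `x ∈ 𝔤` such that `Θ` is the constant 1-form with `𝔤`-component `x`
and `ϑ`-component `0`, i.e. `Θ_{(g,m)}(ξ,μ) = ξ(x)` for all points `(g,m)` and tangent
vectors `(ξ,μ)`.
-/

noncomputable section Stmt15

variable (V G : Type*)
  [NormedAddCommGroup V] [NormedSpace ℝ V] [FiniteDimensional ℝ V]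
  [NormedAddCommGroup G] [NormedSpace ℝ G] [FiniteDimensional ℝ G]
  (d : V →L[ℝ] G)

/-- `dᵀ : 𝔤* → ϑ*`, `(dᵀ ξ)(u) = -ξ(d u)`. -/
def dT (ξ : G →L[ℝ] ℝ) : V →L[ℝ] ℝ := -(ξ.comp d)

/-- Multiplicativity of a 1-form with respect to the action groupoid structure of
`𝔤* ⋉ ϑ* ⇒ ϑ*`. -/
def IsGroupoidMultOneForm
    (Θ : ((G →L[ℝ] ℝ) × (V →L[ℝ] ℝ)) → (((G →L[ℝ] ℝ) × (V →L[ℝ] ℝ)) →L[ℝ] ℝ)) : Prop :=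
  ∀ (h g ξ ξ' : G →L[ℝ] ℝ) (m μ : V →L[ℝ] ℝ),
    Θ (h + g, m) (ξ + ξ', μ)
      = Θ (h, dT V G d g + m) (ξ, dT V G d ξ' + μ) + Θ (g, m) (ξ', μ)

/-- Multiplicativity of a 1-form with respect to the abelian group structure of
`𝔤* × ϑ*` (tangent multiplication is addition). -/
def IsGroupMultOneForm
    (Θ : ((G →L[ℝ] ℝ) × (V →L[ℝ] ℝ)) → (((G →L[ℝ] ℝ) × (V →L[ℝ] ℝ)) →L[ℝ] ℝ)) : Prop :=
  ∀ (p q v w : (G →L[ℝ] ℝ) × (V →L[ℝ] ℝ)),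
    Θ (p + q) (v + w) = Θ p v + Θ q w

theorem bimultiplicative_one_forms_eq_g
    (Θ : ((G →L[ℝ] ℝ) × (V →L[ℝ] ℝ)) → (((G →L[ℝ] ℝ) × (V →L[ℝ] ℝ)) →L[ℝ] ℝ))
    (hΘ : ContDiff ℝ (⊤ : ℕ∞) Θ) :
    (IsGroupoidMultOneForm V G d Θ ∧ IsGroupMultOneForm V G Θ) ↔
      ∃ x : G, ∀ (p : (G →L[ℝ] ℝ) × (V →L[ℝ] ℝ)) (ξ : G →L[ℝ] ℝ) (μ : V →L[ℝ] ℝ),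
        Θ p (ξ, μ) = ξ x := by
  constructor
  · rintro ⟨hgpd, hgrp⟩
    -- group multiplicativity forces Θ to be constant
    have hconst : ∀ p v, Θ p v = Θ 0 v := by
      intro p v
      have h := hgrp p 0 0 v
      simpa using h
    -- the groupoid multiplicativity kills the ϑ*-component
    have hmu : ∀ μ : V →L[ℝ] ℝ, Θ 0 (0, μ) = 0 := by
      intro μ
      have h := hgpd 0 0 0 0 0 μ
      simp only [hconst, dT, ContinuousLinearMap.zero_comp, neg_zero, zero_add,
        add_zero] at h
      linarith
    -- build the element x of G via reflexivity
    set φ : (G →L[ℝ] ℝ) →ₗ[ℝ] ℝ :=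
      ((Θ 0).comp (ContinuousLinearMap.inl ℝ (G →L[ℝ] ℝ) (V →L[ℝ] ℝ))).toLinearMap
      with hφ
    set ψ : Module.Dual ℝ (Module.Dual ℝ G) :=
      φ.comp (LinearMap.toContinuousLinearMap :
        (G →ₗ[ℝ] ℝ) ≃ₗ[ℝ] (G →L[ℝ] ℝ)).toLinearMap with hψ
    refine ⟨(Module.evalEquiv ℝ G).symm ψ, ?_⟩
    intro p ξ μ
    have hx : Module.Dual.eval ℝ G ((Module.evalEquiv ℝ G).symm ψ) = ψ := by
      have := (Module.evalEquiv ℝ G).apply_symm_apply ψ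
      rwa [Module.evalEquiv_apply] at this
    have hψξ : ψ (ξ : G →ₗ[ℝ] ℝ) = ξ ((Module.evalEquiv ℝ G).symm ψ) := by
      conv_lhs => rw [← hx]
      rfl
    have hcoe : (LinearMap.toContinuousLinearMap (ξ : G →ₗ[ℝ] ℝ) : G →L[ℝ] ℝ) = ξ := by
      ext y; rfl
    have hψξ' : ψ (ξ : G →ₗ[ℝ] ℝ) = Θ 0 (ξ, 0) := by
      simp only [hψ, hφ, LinearMap.comp_apply, LinearEquiv.coe_coe,
        ContinuousLinearMap.coe_coe, ContinuousLinearMap.comp_apply,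
        ContinuousLinearMap.inl_apply, hcoe]
    have hsplit : Θ 0 (ξ, μ) = Θ 0 (ξ, 0) + Θ 0 (0, μ) := by
      rw [← map_add]
      norm_num
    rw [hconst, hsplit, hmu, add_zero, ← hψξ', hψξ]
  · rintro ⟨x, hx⟩
    constructor
    · intro h g ξ ξ' m μ
      rw [show ((ξ + ξ' : G →L[ℝ] ℝ), μ) = ((ξ + ξ' : G →L[ℝ] ℝ), μ) from rfl]
      have : Θ (h + g, m) (ξ + ξ', μ) = (ξ + ξ') x := hx _ _ _
      rw [this, hx, hx]
      simp
    · intro p q v w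
      obtain ⟨v1, v2⟩ := v
      obtain ⟨w1, w2⟩ := w
      have h1 : Θ (p + q) ((v1, v2) + (w1, w2)) = Θ (p + q) (v1 + w1, v2 + w2) := rfl
      rw [h1, hx, hx, hx]
      simp


end Stmt15
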